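/- For $y \in [0,1]$, $\min\{\, y - y^2,\; y^2 - y^4 \,\} \le \sqrt5 - 2$, with equality attained at $y = (\sqrt5 - 1)/2$; i.e. $\max_{y\in[0,1]} \min\{y - y^2, y^2 - y^4\} = \sqrt5 - 2$. -/
import Mathlib


open Real

theorem stmt9 :
    (∀ y : ℝ, 0 ≤ y → y ≤ 1 → min (y - y ^ 2) (y ^ 2 - y ^ 4) ≤ Real.sqrt 5 - 2) ∧
    min (((Real.sqrt 5 - 1) / 2) - ((Real.sqrt 5 - 1) / 2) ^ 2)
        (((Real.sqrt 5 - 1) / 2) ^ 2 - ((Real.sqrt 5 - 1) / 2) ^ 4) = Real.sqrt 5 - 2 := by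
  have hs : Real.sqrt 5 ^ 2 = 5 := Real.sq_sqrt (by norm_num)
  have hs2 : (2:ℝ) ≤ Real.sqrt 5 := by
    nlinarith [Real.sqrt_nonneg 5, hs]
  have hs3 : Real.sqrt 5 ≤ 3 := by
    nlinarith [Real.sqrt_nonneg 5, hs]
  constructor
  · intro y hy0 hy1
    rcases le_total y ((Real.sqrt 5 - 1) / 2) with h | h
    · refine le_trans (min_le_right _ _) ?_
      have hy2 : y ^ 2 ≤ (3 - Real.sqrt 5) / 2 := by nlinarith
      nlinarith [mul_nonneg (by nlinarith : (0:ℝ) ≤ (Real.sqrt 5 - 1) / 2 - y ^ 2)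
        (by nlinarith : (0:ℝ) ≤ (3 - Real.sqrt 5) / 2 - y ^ 2)]
    · refine le_trans (min_le_left _ _) ?_
      nlinarith [mul_nonneg (by nlinarith : (0:ℝ) ≤ y - (Real.sqrt 5 - 1) / 2)
        (by nlinarith : (0:ℝ) ≤ y - (3 - Real.sqrt 5) / 2)]
  · have h1 : ((Real.sqrt 5 - 1) / 2) - ((Real.sqrt 5 - 1) / 2) ^ 2 = Real.sqrt 5 - 2 := by
      nlinarith
    have h2 : ((Real.sqrt 5 - 1) / 2) ^ 2 - ((Real.sqrt 5 - 1) / 2) ^ 4 = Real.sqrt 5 - 2 := by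
      nlinarith [hs, sq_nonneg (Real.sqrt 5)]
    rw [h1, h2, min_self]
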